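/- arXiv:2509.07503 — 3 statements merged into one kernel-verified Lean document; each statement's English description precedes it below -/
import Mathlib

section
/- Let {f_k}_{k∈I} be a frame for a Hilbert space H and let {σ_j}_{j∈J} be a collection of subsets of I whose union is I. Then the family of closed subspaces W_j := closure of span{f_k : k ∈ σ_j}, j ∈ J, is an information packet for H. -/
/-!
The frame operator `S u = ∑ₖ ⟪f k, u⟫ • f k` is a well-defined symmetric operator (the
synthesis series converges by the upper frame bound), hence bounded by Hellinger–Toeplitz, and
`re ⟪u, S u⟫ = ∑ₖ ‖⟪u, f k⟫‖² ≥ A ‖u‖²` makes it coercive, hence surjective. So every `x`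
is `∑ₖ ⟪f k, u⟫ • f k` for some `u`; assigning each index `k` to one `j` with `k ∈ σ j`
and summing over the fibres of that assignment splits the series into pieces in the `W j`.
-/

open MeasureTheory

noncomputable section

/-- A family of closed subspaces of a Hilbert space is an information packet if every
vector admits an unconditionally convergent expansion with terms in the subspaces. -/
def InformationPacket {H : Type*} [NormedAddCommGroup H] [InnerProductSpace ℂ H]
    {J : Type*} (W : J → Submodule ℂ H) : Prop :=
  (∀ j, IsClosed (W j : Set H)) ∧
    ∀ f : H, ∃ g : J → H, (∀ j, g j ∈ W j) ∧ HasSum g f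

open scoped InnerProductSpace

theorem HasSum.exists_hasSum_mem_of_mem {α I J S : Type*} [AddCommGroup α] [UniformSpace α]
    [IsUniformAddGroup α] [CompleteSpace α] [T2Space α] [SetLike S α] [AddSubmonoidClass S α]
    {W : J → S} (hW : ∀ j, IsClosed (W j : Set α)) {g : I → α} {x : α} (hg : HasSum g x)
    (r : I → J) (hgr : ∀ k, g k ∈ W (r k)) :
    ∃ v : J → α, (∀ j, v j ∈ W j) ∧ HasSum v x :=
  ⟨_, fun j => tsum_mem (hW j) fun ⟨k, (hk : r k = j)⟩ => hk ▸ hgr k, hg.tsum_fiberwise r⟩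

section InnerProductSpace

variable {𝕜 E : Type*} [RCLike 𝕜] [NormedAddCommGroup E] [InnerProductSpace 𝕜 E]

theorem ContinuousLinearMap.surjective_of_le_re_inner_self [CompleteSpace E] (T : E →L[𝕜] E)
    {A : ℝ} (hA : 0 < A) (hT : ∀ u, A * ‖u‖ ^ 2 ≤ RCLike.re ⟪u, T u⟫_𝕜) :
    Function.Surjective T := by
  have hbelow : ∀ u, A * ‖u‖ ≤ ‖T u‖ := by
    intro u
    rcases (norm_nonneg u).eq_or_lt with hu | hu
    · simp [← hu]
    · have : A * ‖u‖ ^ 2 ≤ ‖u‖ * ‖T u‖ :=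
        (hT u).trans ((RCLike.re_le_norm _).trans (norm_inner_le_norm _ _))
      nlinarith
  have hclosed : IsClosed (LinearMap.range (T : E →ₗ[𝕜] E) : Set E) := by
    rw [LinearMap.coe_range]
    refine (T.antilipschitz_of_bound (K := A⁻¹.toNNReal) fun u => ?_).isClosed_range
      T.uniformContinuous
    rw [Real.coe_toNNReal _ (inv_nonneg.2 hA.le), inv_mul_eq_div, le_div_iff₀ hA, mul_comm]
    exact hbelow u
  have : CompleteSpace (LinearMap.range (T : E →ₗ[𝕜] E)) := hclosed.completeSpace_coe
  have horth : (LinearMap.range (T : E →ₗ[𝕜] E))ᗮ = ⊥ := by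
    refine (Submodule.eq_bot_iff _).2 fun y hy => ?_
    have hTy : RCLike.re ⟪y, T y⟫_𝕜 = 0 := by
      rw [inner_re_symm, hy (T y) (LinearMap.mem_range_self (T : E →ₗ[𝕜] E) y), map_zero]
    by_contra hy0
    linarith [hT y, mul_pos hA (pow_pos (norm_pos_iff.2 hy0) 2)]
  exact LinearMap.range_eq_top.1 (Submodule.orthogonal_eq_bot_iff.1 horth)

variable {I : Type*} {f : I → E}

theorem summable_norm_inner_sq_of_le_tsum {A : ℝ} (hA : 0 < A)
    (hlow : ∀ x, A * ‖x‖ ^ 2 ≤ ∑' k, ‖⟪x, f k⟫_𝕜‖ ^ 2) (x : E) :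
    Summable fun k => ‖⟪x, f k⟫_𝕜‖ ^ 2 := by
  by_contra hs
  have hx := hlow x
  rw [tsum_eq_zero_of_not_summable hs] at hx
  obtain rfl : x = 0 := by
    by_contra h
    linarith [mul_pos hA (pow_pos (norm_pos_iff.2 h) 2)]
  simp at hs

theorem norm_sum_smul_sq_le {B : ℝ} (hB : 0 ≤ B)
    (hbessel : ∀ x (s : Finset I), ∑ k ∈ s, ‖⟪x, f k⟫_𝕜‖ ^ 2 ≤ B * ‖x‖ ^ 2)
    (c : I → 𝕜) (s : Finset I) :
    ‖∑ k ∈ s, c k • f k‖ ^ 2 ≤ B * ∑ k ∈ s, ‖c k‖ ^ 2 := by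
  set y := ∑ k ∈ s, c k • f k
  have hy : ‖y‖ ^ 2 ≤ ∑ k ∈ s, ‖c k‖ * ‖⟪y, f k⟫_𝕜‖ := calc
    ‖y‖ ^ 2 = RCLike.re ⟪y, y⟫_𝕜 := (inner_self_eq_norm_sq y).symm
    _ ≤ ‖⟪y, ∑ k ∈ s, c k • f k⟫_𝕜‖ := RCLike.re_le_norm _
    _ = ‖∑ k ∈ s, c k * ⟪y, f k⟫_𝕜‖ := by simp only [inner_sum, inner_smul_right]
    _ ≤ ∑ k ∈ s, ‖c k‖ * ‖⟪y, f k⟫_𝕜‖ := (norm_sum_le _ _).trans_eq (by simp only [norm_mul])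
  have hsq : (‖y‖ ^ 2) ^ 2 ≤ (∑ k ∈ s, ‖c k‖ ^ 2) * (B * ‖y‖ ^ 2) := calc
    (‖y‖ ^ 2) ^ 2 ≤ (∑ k ∈ s, ‖c k‖ * ‖⟪y, f k⟫_𝕜‖) ^ 2 := pow_le_pow_left₀ (sq_nonneg _) hy 2
    _ ≤ (∑ k ∈ s, ‖c k‖ ^ 2) * ∑ k ∈ s, ‖⟪y, f k⟫_𝕜‖ ^ 2 := Finset.sum_mul_sq_le_sq_mul_sq _ _ _
    _ ≤ (∑ k ∈ s, ‖c k‖ ^ 2) * (B * ‖y‖ ^ 2) :=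
      mul_le_mul_of_nonneg_left (hbessel y s) (Finset.sum_nonneg fun _ _ => sq_nonneg _)
  rcases (sq_nonneg ‖y‖).eq_or_lt with h0 | hpos
  · rw [← h0]
    positivity
  · nlinarith

theorem summable_smul_of_summable_norm_sq [CompleteSpace E] {B : ℝ} (hB : 0 ≤ B)
    (hbessel : ∀ x (s : Finset I), ∑ k ∈ s, ‖⟪x, f k⟫_𝕜‖ ^ 2 ≤ B * ‖x‖ ^ 2)
    {c : I → 𝕜} (hc : Summable fun k => ‖c k‖ ^ 2) :
    Summable fun k => c k • f k := by
  refine summable_iff_vanishing_norm.2 fun ε hε => ?_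
  obtain ⟨s, hs⟩ := summable_iff_vanishing_norm.1 hc (ε ^ 2 / (B + 1)) (by positivity)
  refine ⟨s, fun t ht => ?_⟩
  have htail : ∑ k ∈ t, ‖c k‖ ^ 2 < ε ^ 2 / (B + 1) := (le_abs_self _).trans_lt (hs t ht)
  have hsq : ‖∑ k ∈ t, c k • f k‖ ^ 2 < ε ^ 2 := calc
    ‖∑ k ∈ t, c k • f k‖ ^ 2 ≤ B * ∑ k ∈ t, ‖c k‖ ^ 2 := norm_sum_smul_sq_le hB hbessel c t
    _ ≤ (B + 1) * ∑ k ∈ t, ‖c k‖ ^ 2 :=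
      mul_le_mul_of_nonneg_right (by linarith) (Finset.sum_nonneg fun _ _ => sq_nonneg _)
    _ < (B + 1) * (ε ^ 2 / (B + 1)) := by gcongr
    _ = ε ^ 2 := by field_simp
  exact (pow_lt_pow_iff_left₀ (norm_nonneg _) hε.le two_ne_zero).1 hsq

variable (𝕜) in
def frameOperator (f : I → E) (hsyn : ∀ u, Summable fun k => ⟪f k, u⟫_𝕜 • f k) :
    E →ₗ[𝕜] E where
  toFun u := ∑' k, ⟪f k, u⟫_𝕜 • f k
  map_add' u v := by
    simp only [inner_add_right, add_smul]
    exact (hsyn u).tsum_add (hsyn v)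
  map_smul' a u := by
    simp only [inner_smul_right, mul_smul, RingHom.id_apply]
    exact (hsyn u).tsum_const_smul a

section FrameOperator

variable (hsyn : ∀ u, Summable fun k => ⟪f k, u⟫_𝕜 • f k)

theorem hasSum_frameOperator (u : E) :
    HasSum (fun k => ⟪f k, u⟫_𝕜 • f k) (frameOperator 𝕜 f hsyn u) :=
  (hsyn u).hasSum

theorem hasSum_inner_frameOperator (u v : E) :
    HasSum (fun k => ⟪f k, v⟫_𝕜 * ⟪u, f k⟫_𝕜) ⟪u, frameOperator 𝕜 f hsyn v⟫_𝕜 := by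
  simpa only [innerSL_apply_apply, inner_smul_right] using
    (innerSL 𝕜 u).hasSum (hasSum_frameOperator hsyn v)

theorem frameOperator_isSymmetric : (frameOperator 𝕜 f hsyn).IsSymmetric := by
  intro u v
  rw [← inner_conj_symm]
  refine ((RCLike.hasSum_conj' 𝕜).2 (hasSum_inner_frameOperator hsyn v u)).unique ?_
  simpa only [map_mul, inner_conj_symm, mul_comm] using hasSum_inner_frameOperator hsyn u v

theorem hasSum_re_inner_frameOperator_self (u : E) :
    HasSum (fun k => ‖⟪u, f k⟫_𝕜‖ ^ 2) (RCLike.re ⟪u, frameOperator 𝕜 f hsyn u⟫_𝕜) := by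
  have hterm : ∀ k, ⟪f k, u⟫_𝕜 * ⟪u, f k⟫_𝕜 = ((‖⟪u, f k⟫_𝕜‖ ^ 2 : ℝ) : 𝕜) := fun k => by
    rw [← inner_conj_symm (f k) u, RCLike.conj_mul, RCLike.ofReal_pow]
  simpa only [hterm, RCLike.reCLM_apply, RCLike.ofReal_re] using
    RCLike.reCLM.hasSum (hasSum_inner_frameOperator hsyn u u)

end FrameOperator

theorem exists_hasSum_inner_smul_of_frame [CompleteSpace E] {A B : ℝ} (hA : 0 < A) (hB : 0 ≤ B)
    (hlow : ∀ x, A * ‖x‖ ^ 2 ≤ ∑' k, ‖⟪x, f k⟫_𝕜‖ ^ 2)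
    (hup : ∀ x, ∑' k, ‖⟪x, f k⟫_𝕜‖ ^ 2 ≤ B * ‖x‖ ^ 2) (x : E) :
    ∃ u, HasSum (fun k => ⟪f k, u⟫_𝕜 • f k) x := by
  have hsq := summable_norm_inner_sq_of_le_tsum hA hlow
  have hbessel : ∀ x (s : Finset I), ∑ k ∈ s, ‖⟪x, f k⟫_𝕜‖ ^ 2 ≤ B * ‖x‖ ^ 2 := fun x s =>
    ((hsq x).sum_le_tsum s fun _ _ => sq_nonneg _).trans (hup x)
  have hsyn : ∀ u, Summable fun k => ⟪f k, u⟫_𝕜 • f k := fun u =>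
    summable_smul_of_summable_norm_sq hB hbessel ((hsq u).congr fun k => by rw [norm_inner_symm])
  let S : E →L[𝕜] E := ⟨frameOperator 𝕜 f hsyn, (frameOperator_isSymmetric hsyn).continuous⟩
  obtain ⟨u, rfl⟩ := S.surjective_of_le_re_inner_self hA (fun u =>
    (hlow u).trans_eq (hasSum_re_inner_frameOperator_self hsyn u).tsum_eq) x
  exact ⟨u, hasSum_frameOperator hsyn u⟩

end InnerProductSpace

theorem stmt2_general {H : Type*} [NormedAddCommGroup H] [InnerProductSpace ℂ H] [CompleteSpace H]
    {I : Type*} {J : Type*} (f : I → H)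
    (hframe : ∃ A B : ℝ, 0 < A ∧ 0 < B ∧ ∀ x : H,
      A * ‖x‖ ^ 2 ≤ ∑' k, ‖(inner ℂ x (f k) : ℂ)‖ ^ 2 ∧
      ∑' k, ‖(inner ℂ x (f k) : ℂ)‖ ^ 2 ≤ B * ‖x‖ ^ 2)
    (σ : J → Set I) (hcover : (⋃ j, σ j) = Set.univ) :
    InformationPacket
      (fun j => (Submodule.span ℂ (f '' σ j)).topologicalClosure) := by
  obtain ⟨A, B, hA, hB, hbounds⟩ := hframe
  choose r hr using fun k => Set.mem_iUnion.1 (hcover ▸ Set.mem_univ k : k ∈ ⋃ j, σ j)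
  have hclosed j := Submodule.isClosed_topologicalClosure (Submodule.span ℂ (f '' σ j))
  refine ⟨hclosed, fun x => ?_⟩
  obtain ⟨u, hu⟩ := exists_hasSum_inner_smul_of_frame hA hB.le
    (fun x => (hbounds x).1) (fun x => (hbounds x).2) x
  exact hu.exists_hasSum_mem_of_mem hclosed r fun k => Submodule.le_topologicalClosure _
    (Submodule.smul_mem _ _ (Submodule.subset_span ⟨k, hr k, rfl⟩))

theorem stmt2 {H : Type*} [NormedAddCommGroup H] [InnerProductSpace ℂ H] [CompleteSpace H]
    {I : Type*} [Countable I] {J : Type*} [Countable J] (f : I → H)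
    (hframe : ∃ A B : ℝ, 0 < A ∧ 0 < B ∧ ∀ x : H,
      A * ‖x‖ ^ 2 ≤ ∑' k, ‖(inner ℂ x (f k) : ℂ)‖ ^ 2 ∧
      ∑' k, ‖(inner ℂ x (f k) : ℂ)‖ ^ 2 ≤ B * ‖x‖ ^ 2)
    (σ : J → Set I) (hcover : (⋃ j, σ j) = Set.univ) :
    InformationPacket
      (fun j => (Submodule.span ℂ (f '' σ j)).topologicalClosure) :=
  stmt2_general f hframe σ hcover
end
end

section
/- For a fusion frame {W_j, ω_j}_{j∈J}, the fusion frame operator S f := Σ_{j∈J} ω_j² P_j f is a bounded, bijective, self-adjoint, and positive operator on H, and the series defining S f converges unconditionally for every f ∈ H. -/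
/-! For a finite partial sum `v = ∑_{j ∈ s} ω_j² P_j f` one has
`‖v‖² = ∑_{j ∈ s} ω_j² ⟪P_j f, P_j v⟫`, so Cauchy–Schwarz together with the upper frame bound
for `v` gives `‖v‖² ≤ B ∑_{j ∈ s} ω_j² ‖P_j f‖²`. Hence the series defining `S f` is Cauchy, and
by Banach–Steinhaus its sum is a bounded operator. Termwise, `⟪S f, g⟫ = ∑ ω_j² ⟪P_j f, P_j g⟫`,
which is hermitian in `f, g` and equals `∑ ω_j² ‖P_j f‖² ≥ A ‖f‖²` for `g = f`; an operator
bounded below in this way is invertible. -/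

open MeasureTheory

noncomputable section

/-- `P` is the orthogonal projection of `H` onto the closed subspace `K`. -/
def IsOrthoProjOn {H : Type*} [NormedAddCommGroup H] [InnerProductSpace ℂ H]
    (K : Submodule ℂ H) (P : H →L[ℂ] H) : Prop :=
  ∀ f : H, P f ∈ K ∧ f - P f ∈ Kᗮ

namespace IsOrthoProjOn

variable {H : Type*} [NormedAddCommGroup H] [InnerProductSpace ℂ H]
  {K : Submodule ℂ H} {P : H →L[ℂ] H}

theorem inner_apply_left (hP : IsOrthoProjOn K P) (f g : H) :
    inner ℂ (P f) g = inner ℂ (P f) (P g) := by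
  have h := Submodule.inner_right_of_mem_orthogonal (hP f).1 (hP g).2
  rwa [inner_sub_right, sub_eq_zero] at h

theorem inner_apply_right (hP : IsOrthoProjOn K P) (f g : H) :
    inner ℂ f (P g) = inner ℂ (P f) (P g) := by
  rw [← inner_conj_symm, hP.inner_apply_left, inner_conj_symm]

end IsOrthoProjOn

theorem summable_of_tsum_ne_zero {α β : Type*} [AddCommMonoid α] [TopologicalSpace α]
    {a : β → α} (h : ∑' b, a b ≠ 0) : Summable a :=
  by_contra fun hs => h (tsum_eq_zero_of_not_summable hs)

section WeightedProjections

variable {H : Type*} [NormedAddCommGroup H] [InnerProductSpace ℂ H]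
  {J : Type*} {K : J → Submodule ℂ H} {P : J → H →L[ℂ] H} {c : J → ℝ} {B : ℝ}

theorem norm_sq_sum_smul_apply_le (hc : ∀ j, 0 ≤ c j) (hP : ∀ j, IsOrthoProjOn (K j) (P j))
    (hB₀ : 0 ≤ B) (hB : ∀ f (s : Finset J), ∑ j ∈ s, c j * ‖P j f‖ ^ 2 ≤ B * ‖f‖ ^ 2)
    (f : H) (s : Finset J) :
    ‖∑ j ∈ s, (c j : ℂ) • P j f‖ ^ 2 ≤ B * ∑ j ∈ s, c j * ‖P j f‖ ^ 2 := by
  set v := ∑ j ∈ s, (c j : ℂ) • P j f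
  have hv : ‖v‖ ^ 2 = ∑ j ∈ s, c j * (inner ℂ (P j f) (P j v)).re := by
    rw [← inner_self_eq_norm_sq (𝕜 := ℂ), sum_inner, RCLike.re_to_complex, Complex.re_sum]
    refine Finset.sum_congr rfl fun j _ => ?_
    rw [inner_smul_left, (hP j).inner_apply_left, Complex.conj_ofReal, Complex.re_ofReal_mul]
  have hCS : (‖v‖ ^ 2) ^ 2 ≤ (∑ j ∈ s, c j * ‖P j f‖ ^ 2) * ∑ j ∈ s, c j * ‖P j v‖ ^ 2 := by
    rw [hv]
    refine Finset.sum_sq_le_sum_mul_sum_of_sq_le_mul s (fun j _ => mul_nonneg (hc j) (sq_nonneg _))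
      (fun j _ => mul_nonneg (hc j) (sq_nonneg _)) fun j _ => ?_
    calc (c j * (inner ℂ (P j f) (P j v)).re) ^ 2
        = c j ^ 2 * |(inner ℂ (P j f) (P j v)).re| ^ 2 := by rw [mul_pow, sq_abs]
      _ ≤ c j ^ 2 * (‖P j f‖ * ‖P j v‖) ^ 2 := by
          gcongr
          exact (Complex.abs_re_le_norm _).trans (norm_inner_le_norm _ _)
      _ = c j * ‖P j f‖ ^ 2 * (c j * ‖P j v‖ ^ 2) := by ring
  have hF : 0 ≤ ∑ j ∈ s, c j * ‖P j f‖ ^ 2 :=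
    Finset.sum_nonneg fun j _ => mul_nonneg (hc j) (sq_nonneg _)
  have h : ‖v‖ ^ 2 * ‖v‖ ^ 2 ≤ (B * ∑ j ∈ s, c j * ‖P j f‖ ^ 2) * ‖v‖ ^ 2 := by
    rw [← sq, mul_comm B, mul_assoc]
    exact hCS.trans (mul_le_mul_of_nonneg_left (hB v s) hF)
  rcases (sq_nonneg ‖v‖).eq_or_lt with h0 | hpos
  · rw [← h0]
    exact mul_nonneg hB₀ hF
  · exact le_of_mul_le_mul_right h hpos

theorem summable_smul_apply [CompleteSpace H] (hc : ∀ j, 0 ≤ c j)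
    (hP : ∀ j, IsOrthoProjOn (K j) (P j)) (hB₀ : 0 ≤ B)
    (hB : ∀ f (s : Finset J), ∑ j ∈ s, c j * ‖P j f‖ ^ 2 ≤ B * ‖f‖ ^ 2) (f : H) :
    Summable fun j => (c j : ℂ) • P j f := by
  have hreal : Summable fun j => c j * ‖P j f‖ ^ 2 :=
    summable_of_sum_le (fun j => mul_nonneg (hc j) (sq_nonneg _)) (hB f)
  refine summable_iff_vanishing_norm.2 fun ε hε => ?_
  obtain ⟨s, hs⟩ := summable_iff_vanishing_norm.1 hreal (ε ^ 2 / (B + 1)) (by positivity)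
  refine ⟨s, fun t ht => lt_of_pow_lt_pow_left₀ 2 hε.le ?_⟩
  calc ‖∑ j ∈ t, (c j : ℂ) • P j f‖ ^ 2 ≤ B * ∑ j ∈ t, c j * ‖P j f‖ ^ 2 :=
        norm_sq_sum_smul_apply_le hc hP hB₀ hB f t
    _ ≤ B * (ε ^ 2 / (B + 1)) := by
        gcongr
        exact (le_abs_self _).trans (hs t ht).le
    _ < ε ^ 2 := by
        rw [← mul_div_assoc, div_lt_iff₀ (by positivity)]
        nlinarith [pow_pos hε 2]

theorem exists_hasSum_smul_apply [CompleteSpace H] [Countable J] (hc : ∀ j, 0 ≤ c j)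
    (hP : ∀ j, IsOrthoProjOn (K j) (P j)) (hB₀ : 0 ≤ B)
    (hB : ∀ f (s : Finset J), ∑ j ∈ s, c j * ‖P j f‖ ^ 2 ≤ B * ‖f‖ ^ 2) :
    ∃ S : H →L[ℂ] H, ∀ f, HasSum (fun j => (c j : ℂ) • P j f) (S f) :=
  have hsum := summable_smul_apply hc hP hB₀ hB
  ⟨continuousLinearMapOfTendsto (fun s : Finset J => ∑ j ∈ s, (c j : ℂ) • P j)
      (f := fun f => ∑' j, (c j : ℂ) • P j f) (tendsto_pi_nhds.2 fun f => by
        simp only [_root_.sum_apply, _root_.smul_apply]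
        exact (hsum f).hasSum),
    fun f => (hsum f).hasSum⟩

variable {S : H →L[ℂ] H}

theorem hasSum_inner_apply (hP : ∀ j, IsOrthoProjOn (K j) (P j))
    (hS : ∀ f, HasSum (fun j => (c j : ℂ) • P j f) (S f)) (f g : H) :
    HasSum (fun j => (c j : ℂ) * inner ℂ (P j f) (P j g)) (inner ℂ f (S g)) := by
  have h := (innerSL ℂ f).hasSum (hS g)
  simp only [innerSL_apply_apply, inner_smul_right] at h
  exact h.congr_fun fun j => by rw [(hP j).inner_apply_right f g]

theorem isSymmetric_of_hasSum (hP : ∀ j, IsOrthoProjOn (K j) (P j))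
    (hS : ∀ f, HasSum (fun j => (c j : ℂ) • P j f) (S f)) : (S : H →ₗ[ℂ] H).IsSymmetric := by
  intro f g
  rw [ContinuousLinearMap.coe_coe, ← inner_conj_symm]
  refine HasSum.unique ?_ (hasSum_inner_apply hP hS f g)
  convert (hasSum_inner_apply hP hS g f).star using 1
  · funext j
    rw [star_mul', Complex.star_def, Complex.conj_ofReal, inner_conj_symm]
  · rfl

theorem hasSum_re_inner_apply_self (hP : ∀ j, IsOrthoProjOn (K j) (P j))
    (hS : ∀ f, HasSum (fun j => (c j : ℂ) • P j f) (S f)) (f : H) :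
    HasSum (fun j => c j * ‖P j f‖ ^ 2) (inner ℂ (S f) f).re := by
  rw [← inner_conj_symm, Complex.conj_re]
  simpa [inner_self_eq_norm_sq_to_K, ← Complex.ofReal_pow] using
    Complex.hasSum_re (hasSum_inner_apply hP hS f f)

end WeightedProjections

theorem stmt5_general {H : Type*} [NormedAddCommGroup H] [InnerProductSpace ℂ H] [CompleteSpace H]
    {J : Type*} [Countable J] (W : J → Submodule ℂ H)
    (ω : J → ℝ)
    (P : J → H →L[ℂ] H) (hP : ∀ j, IsOrthoProjOn (W j) (P j))
    (hfusion : ∃ A B : ℝ, 0 < A ∧ 0 < B ∧ ∀ f : H,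
      A * ‖f‖ ^ 2 ≤ ∑' j, ω j ^ 2 * ‖P j f‖ ^ 2 ∧
      ∑' j, ω j ^ 2 * ‖P j f‖ ^ 2 ≤ B * ‖f‖ ^ 2) :
    ∃ S : H →L[ℂ] H,
      (∀ f : H, HasSum (fun j => ((ω j : ℂ) ^ 2) • P j f) (S f)) ∧
      Function.Bijective S ∧
      (∀ f g : H, (inner ℂ (S f) g : ℂ) = inner ℂ f (S g)) ∧
      (∀ f : H, 0 ≤ (inner ℂ (S f) f : ℂ).re) := by
  obtain ⟨A, B, hA, hB, hframe⟩ := hfusion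
  have hc : ∀ j, 0 ≤ ω j ^ 2 := fun j => sq_nonneg _
  -- `∑'` is `0` on non-summable families, so the lower frame bound forces summability.
  have hsum : ∀ f : H, Summable fun j => ω j ^ 2 * ‖P j f‖ ^ 2 := by
    intro f
    rcases eq_or_ne f 0 with rfl | hf
    · simp
    · exact summable_of_tsum_ne_zero ((mul_pos hA (by positivity)).trans_le (hframe f).1).ne'
  obtain ⟨S, hS⟩ := exists_hasSum_smul_apply hc hP hB.le fun f s =>
    ((hsum f).sum_le_tsum s fun j _ => mul_nonneg (hc j) (sq_nonneg _)).trans (hframe f).2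
  have hquad := hasSum_re_inner_apply_self hP hS
  have hlower : ∀ f, A * ‖f‖ ^ 2 ≤ (inner ℂ (S f) f).re := fun f =>
    (hquad f).tsum_eq ▸ (hframe f).1
  refine ⟨S, fun f => by simpa using hS f, ?_, isSymmetric_of_hasSum hP hS,
    fun f => (hquad f).nonneg fun j => mul_nonneg (hc j) (sq_nonneg _)⟩
  refine ContinuousLinearMap.isUnit_iff_bijective.1
    (S.isUnit_of_forall_le_norm_inner_map (c := ⟨A, hA.le⟩) hA fun f => ?_)
  rw [mul_comm]
  exact (hlower f).trans (Complex.re_le_norm _)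

theorem stmt5 {H : Type*} [NormedAddCommGroup H] [InnerProductSpace ℂ H] [CompleteSpace H]
    {J : Type*} [Countable J] (W : J → Submodule ℂ H) (hWc : ∀ j, IsClosed (W j : Set H))
    (ω : J → ℝ) (hω : ∀ j, 0 < ω j)
    (P : J → H →L[ℂ] H) (hP : ∀ j, IsOrthoProjOn (W j) (P j))
    (hfusion : ∃ A B : ℝ, 0 < A ∧ 0 < B ∧ ∀ f : H,
      A * ‖f‖ ^ 2 ≤ ∑' j, ω j ^ 2 * ‖P j f‖ ^ 2 ∧
      ∑' j, ω j ^ 2 * ‖P j f‖ ^ 2 ≤ B * ‖f‖ ^ 2) :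
    ∃ S : H →L[ℂ] H,
      (∀ f : H, HasSum (fun j => ((ω j : ℂ) ^ 2) • P j f) (S f)) ∧
      Function.Bijective S ∧
      (∀ f g : H, (inner ℂ (S f) g : ℂ) = inner ℂ f (S g)) ∧
      (∀ f : H, 0 ≤ (inner ℂ (S f) f : ℂ).re) :=
  stmt5_general W ω P hP hfusion
end
end

section
/- Let ψ ∈ L²(ℝ) with ψ̂ bounded, supp ψ̂ ⊆ I finite, and C|γ|^β ≤ |ψ̂(γ)| ≤ D|γ|^α for γ in a neighborhood U of 0 (C, D, α, β > 0). Fix a > 1, N ∈ ℕ, ℓ_j ∈ {0,…,N−1}, and let J ∈ ℤ satisfy ([−a^{NJ}, −a^{N(J−1)}] ∪ [a^{N(J−1)}, a^{NJ}]) ⊂ U. Then for a.e. γ with |γ| ∈ [a^{N(j₀−1)}, a^{Nj₀}], there exists K > 0 (independent of γ, j₀) such that Σ_{j∈ℤ} |ψ̂(γ / a^{ℓ_j+Nj})|² ≤ D² a^{2αNJ} / (1 − a^{−2αN}) + K ‖ψ̂‖_∞², a finite upper bound independent of γ and of the choice of {ℓ_j}. -/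
/-!
Write `x_j = γ / a ^ (ℓ_j + N j)`. For `|γ|` in the `j₀`-th annulus, `|x_j|` lies between
`a ^ (N (j₀ - j - 2))` and `a ^ (N (j₀ - j))`. Hence the terms vanish once `x_j` leaves the
support of `ψ̂`, i.e. for `j < j₀ - s - 1`; once `x_j` enters the neighbourhood `U` of `0`, i.e. for
`j ≥ j₀ + T`, they are bounded by the geometric tail `D² a ^ (2αN(j₀ - j))`; and each of the
`T + s + 1` terms in between is at most `‖ψ̂‖∞²`. Since `s` depends only on the support and `T` only
on `U` and `J`, this count works for every `j₀` and `γ`.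
-/

open MeasureTheory

noncomputable section

/-- Dilation operator `D_a f(x) = a^{1/2} f(ax)` on functions on `ℝ`. -/
def Dil (a : ℝ) (f : ℝ → ℂ) : ℝ → ℂ := fun x => (Real.sqrt a : ℂ) * f (a * x)

/-- Translation operator `T_b f(x) = f(x - b)`. -/
def Tra (b : ℝ) (f : ℝ → ℂ) : ℝ → ℂ := fun x => f (x - b)

/-- Modulation operator `E_c f(x) = e^{2πicx} f(x)`. -/
def Mod' (c : ℝ) (f : ℝ → ℂ) : ℝ → ℂ :=
  fun x => Complex.exp (2 * Real.pi * Complex.I * c * x) * f x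

/-- The `L²(ℝ)` inner product `⟨f, g⟩ = ∫ f(x) conj(g(x)) dx`. -/
def L2inner (f g : ℝ → ℂ) : ℂ := ∫ x : ℝ, f x * (starRingEnd ℂ) (g x)

/-- The `L²(ℝ)` norm. -/
def L2norm (f : ℝ → ℂ) : ℝ := (eLpNorm f 2 volume).toReal

/-- A family of functions is a frame for `L²(ℝ)` with bounds `A, B`. -/
def IsFrame {ι : Type*} (g : ι → ℝ → ℂ) (A B : ℝ) : Prop :=
  0 < A ∧ 0 < B ∧ ∀ f : ℝ → ℂ, MemLp f 2 volume →
    A * L2norm f ^ 2 ≤ ∑' i, ‖L2inner f (g i)‖ ^ 2 ∧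
    ∑' i, ‖L2inner f (g i)‖ ^ 2 ≤ B * L2norm f ^ 2

open Set

lemma tsum_int_le_of_eq_zero_of_geometric_tail {F : ℤ → ℝ} {A B r : ℝ} (m : ℤ) (p : ℕ)
    (hF : ∀ j, 0 ≤ F j) (hzero : ∀ j < m, F j = 0) (hB : ∀ j, F j ≤ B)
    (htail : ∀ k : ℕ, F (m + p + k) ≤ A * r ^ k) (hr₀ : 0 ≤ r) (hr₁ : r < 1) :
    ∑' j, F j ≤ p * B + A / (1 - r) := by
  have hinj : Function.Injective fun k : ℕ => m + k := fun k k' h => by simpa using h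
  have hsupp : Function.support F ⊆ range fun k : ℕ => m + k := by
    intro j hj
    have hmj : m ≤ j := not_lt.mp fun h => hj (hzero j h)
    exact ⟨(j - m).toNat, by simp only; omega⟩
  have htail' : ∀ k : ℕ, F (m + ↑(k + p)) ≤ A * r ^ k := fun k => by
    simpa [add_comm, add_left_comm, add_assoc] using htail k
  have hgeom : Summable fun k : ℕ => A * r ^ k :=
    (summable_geometric_of_lt_one hr₀ hr₁).mul_left A
  have hsum : Summable fun k : ℕ => F (m + k) :=
    (summable_nat_add_iff p).mp (hgeom.of_nonneg_of_le (fun _ => hF _) htail')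
  rw [← hinj.tsum_eq hsupp, ← hsum.sum_add_tsum_nat_add p]
  gcongr
  · simpa using Finset.sum_le_card_nsmul (Finset.range p) _ B fun j _ => hB _
  · calc ∑' k : ℕ, F (m + ↑(k + p)) ≤ ∑' k : ℕ, A * r ^ k :=
          ((summable_nat_add_iff p).mpr hsum).tsum_le_tsum htail' hgeom
      _ = A / (1 - r) := by rw [tsum_mul_left, tsum_geometric_of_lt_one hr₀ hr₁, div_eq_mul_inv]

lemma abs_div_rpow_mem_Icc {a γ lo hi e : ℝ} (ha : 0 < a) (hγ : |γ| ∈ Icc (a ^ lo) (a ^ hi)) :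
    |γ / a ^ e| ∈ Icc (a ^ (lo - e)) (a ^ (hi - e)) := by
  have hdiv : ∀ u, a ^ (u - e) = a ^ u / a ^ e := fun u => Real.rpow_sub ha u e
  rw [abs_div, abs_of_pos (Real.rpow_pos_of_pos ha e), hdiv, hdiv]
  exact ⟨div_le_div_of_nonneg_right hγ.1 (Real.rpow_pos_of_pos ha e).le,
    div_le_div_of_nonneg_right hγ.2 (Real.rpow_pos_of_pos ha e).le⟩

lemma sq_norm_le_of_norm_le_mul_rpow {E : Type*} [SeminormedAddCommGroup E] {z : E}
    {x t D α : ℝ} (hz : ‖z‖ ≤ D * |x| ^ α) (hα : 0 ≤ α) (hx : |x| ≤ t) :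
    ‖z‖ ^ 2 ≤ D ^ 2 * t ^ (2 * α) := by
  have hxt : |x| ^ α ≤ t ^ α := Real.rpow_le_rpow (abs_nonneg x) hx hα
  have ht : 0 ≤ t := (abs_nonneg x).trans hx
  calc ‖z‖ ^ 2 ≤ (D * |x| ^ α) ^ 2 := pow_le_pow_left₀ (norm_nonneg z) hz 2
    _ = D ^ 2 * (|x| ^ α) ^ 2 := mul_pow D _ 2
    _ ≤ D ^ 2 * (t ^ α) ^ 2 := by gcongr
    _ = D ^ 2 * t ^ (2 * α) := by rw [← Real.rpow_mul_natCast ht, mul_comm α]; norm_num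

lemma exists_rpow_neg_natCast_lt {a ε : ℝ} (ha : 1 < a) (hε : 0 < ε) :
    ∃ n : ℕ, a ^ (-(n : ℝ)) < ε := by
  obtain ⟨n, hn⟩ := exists_pow_lt_of_lt_one hε (inv_lt_one_of_one_lt₀ ha)
  exact ⟨n, by rwa [Real.rpow_neg (by positivity), Real.rpow_natCast, ← inv_pow]⟩

lemma tsum_sq_norm_comp_div_rpow_le {E : Type*} [SeminormedAddCommGroup E] {f : ℝ → E}
    {M R D α ε a : ℝ} (hM : ∀ x, ‖f x‖ ≤ M) (hR : ∀ x, R < |x| → f x = 0)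
    (hloc : ∀ x, |x| < ε → ‖f x‖ ≤ D * |x| ^ α) (hα : 0 < α) (ha : 1 < a)
    {N : ℕ} (hN : 0 < N) {ℓ : ℤ → ℕ} (hℓ : ∀ j, ℓ j < N) {T s : ℕ}
    (hT : a ^ (-(T : ℝ)) < ε) (hs : R < a ^ (s : ℝ)) (j₀ : ℤ) {γ : ℝ}
    (hγ : |γ| ∈ Icc (a ^ ((N : ℝ) * ((j₀ : ℝ) - 1))) (a ^ ((N : ℝ) * (j₀ : ℝ)))) :
    ∑' j : ℤ, ‖f (γ / a ^ ((ℓ j : ℝ) + (N : ℝ) * (j : ℝ)))‖ ^ 2 ≤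
      (T + s + 1 : ℕ) * M ^ 2 + D ^ 2 * a ^ (-(2 * α * N * T)) / (1 - a ^ (-(2 * α * N))) := by
  have ha₀ : 0 < a := one_pos.trans ha
  have hN₁ : (1 : ℝ) ≤ N := by exact_mod_cast hN
  have hx : ∀ j : ℤ, |γ / a ^ ((ℓ j : ℝ) + (N : ℝ) * (j : ℝ))| ∈
      Icc (a ^ ((N * (j₀ - 1) - (ℓ j + N * j) : ℝ))) (a ^ ((N * j₀ - (ℓ j + N * j) : ℝ))) :=
    fun j => abs_div_rpow_mem_Icc ha₀ hγ
  refine tsum_int_le_of_eq_zero_of_geometric_tail (j₀ - s - 1) (T + s + 1)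
    (fun j => by positivity) (fun j hj => ?_) (fun j => pow_le_pow_left₀ (norm_nonneg _) (hM _) 2)
    (fun k => ?_) (by positivity) (Real.rpow_lt_one_of_one_lt_of_neg ha (by nlinarith))
  · have hj' : (j : ℝ) ≤ j₀ - s - 2 := by exact_mod_cast (by omega : j ≤ j₀ - s - 2)
    have hℓj : (ℓ j : ℝ) ≤ N := by exact_mod_cast (hℓ j).le
    have hfar : R < |γ / a ^ ((ℓ j : ℝ) + (N : ℝ) * (j : ℝ))| := by
      refine hs.trans_le (le_trans (Real.rpow_le_rpow_of_exponent_le ha.le ?_) (hx j).1)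
      nlinarith [(Nat.cast_nonneg s : (0 : ℝ) ≤ s)]
    rw [hR _ hfar, norm_zero, zero_pow two_ne_zero]
  · set j : ℤ := j₀ - s - 1 + (T + s + 1 : ℕ) + k
    have hj : (j : ℝ) = j₀ + T + k := by push_cast [j]; ring
    have hnear : |γ / a ^ ((ℓ j : ℝ) + (N : ℝ) * (j : ℝ))| ≤ a ^ (-(N * (T + k) : ℝ)) :=
      (hx j).2.trans (Real.rpow_le_rpow_of_exponent_le ha.le (by rw [hj]; nlinarith))
    have hsmall : a ^ (-(N * (T + k) : ℝ)) ≤ a ^ (-(T : ℝ)) :=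
      Real.rpow_le_rpow_of_exponent_le ha.le (by nlinarith [(Nat.cast_nonneg k : (0 : ℝ) ≤ k)])
    refine (sq_norm_le_of_norm_le_mul_rpow (hloc _ ((hnear.trans hsmall).trans_lt hT)) hα.le
      hnear).trans_eq ?_
    rw [mul_assoc, ← Real.rpow_mul ha₀.le, ← Real.rpow_mul_natCast ha₀.le, ← Real.rpow_add ha₀]
    ring_nf

theorem stmt19_general (ψ : ℝ → ℂ) (M : ℝ)
    (hbdd : ∀ γ : ℝ, ‖FourierTransform.fourier ψ γ‖ ≤ M)
    (c d : ℝ)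
    (hsupp : Function.support (FourierTransform.fourier ψ) ⊆ Set.Icc c d)
    (C D α β : ℝ) (hα : 0 < α)
    (U : Set ℝ) (hU : U ∈ nhds (0 : ℝ))
    (hloc : ∀ γ ∈ U, C * |γ| ^ β ≤ ‖FourierTransform.fourier ψ γ‖ ∧
      ‖FourierTransform.fourier ψ γ‖ ≤ D * |γ| ^ α)
    (a : ℝ) (ha : 1 < a) (N : ℕ) (hN : 0 < N) (ℓ : ℤ → ℕ) (hℓ : ∀ j, ℓ j < N)
    (J : ℤ) :
    ∃ K : ℕ, 0 < K ∧ ∀ j₀ : ℤ, ∀ᵐ γ : ℝ ∂volume,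
      |γ| ∈ Set.Icc (a ^ ((N : ℝ) * ((j₀ : ℝ) - 1))) (a ^ ((N : ℝ) * (j₀ : ℝ))) →
      ∑' j : ℤ, ‖FourierTransform.fourier ψ (γ / a ^ ((ℓ j : ℝ) + (N : ℝ) * (j : ℝ)))‖ ^ 2 ≤
        D ^ 2 * a ^ (2 * α * (N : ℝ) * (J : ℝ)) / (1 - a ^ (-(2 * α * (N : ℝ)))) +
          (K : ℝ) * M ^ 2 := by
  obtain ⟨ε, hε, hball⟩ := Metric.mem_nhds_iff.mp hU
  have hnear : ∀ x, |x| < ε → ‖FourierTransform.fourier ψ x‖ ≤ D * |x| ^ α := fun x hx =>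
    (hloc x (hball (mem_ball_zero_iff.mpr hx))).2
  have hfar : ∀ x, max |c| |d| < |x| → FourierTransform.fourier ψ x = 0 := fun x hx =>
    Function.notMem_support.mp fun h => hx.not_ge (abs_le_max_abs_abs (hsupp h).1 (hsupp h).2)
  obtain ⟨n, hn⟩ := exists_rpow_neg_natCast_lt ha hε
  obtain ⟨s, hs⟩ := pow_unbounded_of_one_lt (max |c| |d|) ha
  set T := n + (-J).toNat
  have hJT : -(T : ℝ) ≤ J := by exact_mod_cast (by omega : -(T : ℤ) ≤ J)
  have hT : a ^ (-(T : ℝ)) < ε :=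
    (Real.rpow_le_rpow_of_exponent_le ha.le (by push_cast [T]; linarith)).trans_lt hn
  have hr : a ^ (-(2 * α * N)) < 1 :=
    Real.rpow_lt_one_of_one_lt_of_neg ha (neg_lt_zero.mpr (by positivity))
  refine ⟨T + s + 1, by omega, fun j₀ => Filter.Eventually.of_forall fun γ hγ => ?_⟩
  rw [add_comm]
  refine (tsum_sq_norm_comp_div_rpow_le hbdd hfar hnear hα ha hN hℓ hT
    (by rwa [Real.rpow_natCast]) j₀ hγ).trans ?_
  have h2αN : 0 < 2 * α * N := by positivity
  gcongr
  · linarith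
  · nlinarith

theorem stmt19 (ψ : ℝ → ℂ) (hψ : MemLp ψ 2 volume) (M : ℝ)
    (hbdd : ∀ γ : ℝ, ‖FourierTransform.fourier ψ γ‖ ≤ M)
    (c d : ℝ) (hcd : c < d)
    (hsupp : Function.support (FourierTransform.fourier ψ) ⊆ Set.Icc c d)
    (C D α β : ℝ) (hC : 0 < C) (hD : 0 < D) (hα : 0 < α) (hβ : 0 < β)
    (U : Set ℝ) (hU : U ∈ nhds (0 : ℝ))
    (hloc : ∀ γ ∈ U, C * |γ| ^ β ≤ ‖FourierTransform.fourier ψ γ‖ ∧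
      ‖FourierTransform.fourier ψ γ‖ ≤ D * |γ| ^ α)
    (a : ℝ) (ha : 1 < a) (N : ℕ) (hN : 0 < N) (ℓ : ℤ → ℕ) (hℓ : ∀ j, ℓ j < N)
    (J : ℤ)
    (hJ : Set.Icc (-(a ^ ((N : ℝ) * (J : ℝ)))) (-(a ^ ((N : ℝ) * ((J : ℝ) - 1)))) ∪
          Set.Icc (a ^ ((N : ℝ) * ((J : ℝ) - 1))) (a ^ ((N : ℝ) * (J : ℝ))) ⊆ U) :
    ∃ K : ℕ, 0 < K ∧ ∀ j₀ : ℤ, ∀ᵐ γ : ℝ ∂volume,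
      |γ| ∈ Set.Icc (a ^ ((N : ℝ) * ((j₀ : ℝ) - 1))) (a ^ ((N : ℝ) * (j₀ : ℝ))) →
      ∑' j : ℤ, ‖FourierTransform.fourier ψ (γ / a ^ ((ℓ j : ℝ) + (N : ℝ) * (j : ℝ)))‖ ^ 2 ≤
        D ^ 2 * a ^ (2 * α * (N : ℝ) * (J : ℝ)) / (1 - a ^ (-(2 * α * (N : ℝ)))) +
          (K : ℝ) * M ^ 2 :=
  stmt19_general ψ M hbdd c d hsupp C D α β hα U hU hloc a ha N hN ℓ hℓ J
end
end
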